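/- arXiv:2411.16478 — 8 statements merged into one kernel-verified Lean document; each statement's English description precedes it below -/
import Mathlib

section
/- Let X be a finite nonempty set, let Π and P be full-support probability distributions on X, set r(x) = P(x)/Π(x), α = max_{x∈X} P(x)/Π(x) and β = max_{x∈X} Π(x)/P(x). Then E_{Y∼Π}[(log r(Y))²] ≤ max{α, β²} − 1. -/
/-!
Since `cosh y ≥ 1 + y² / 2` and `cosh (log t) = (t + t⁻¹) / 2`, we have
`(log t)² ≤ t + t⁻¹ - 2`. Taking `t = r(x)` and averaging against `Π` gives
`E_Π[(log r)²] ≤ E_Π[1 / r] - 1 ≤ β - 1`, and `β ≥ E_P[1 / r] = 1` so `β ≤ β²`.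
-/

open Finset Real

lemma sq_le_sinh_sq (z : ℝ) : z ^ 2 ≤ sinh z ^ 2 := by
  wlog hz : 0 ≤ z generalizing z
  · simpa using this (-z) (by linarith)
  exact pow_le_pow_left₀ hz (self_le_sinh_iff.2 hz) 2

lemma one_add_sq_div_two_le_cosh (y : ℝ) : 1 + y ^ 2 / 2 ≤ cosh y := by
  have h := sq_le_sinh_sq (y / 2)
  rw [show y = 2 * (y / 2) by ring, cosh_two_mul, cosh_sq]
  linarith

lemma sq_log_le_add_inv_sub_two {t : ℝ} (ht : 0 < t) : log t ^ 2 ≤ t + t⁻¹ - 2 := by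
  have h := one_add_sq_div_two_le_cosh (log t)
  rw [cosh_log ht] at h
  linarith

lemma Finset.sum_mul_le_sup'_univ {X : Type*} [Fintype X] [Nonempty X] (f w : X → ℝ)
    (hw : ∀ x, 0 ≤ w x) (hw1 : ∑ x, w x = 1) :
    ∑ x, f x * w x ≤ univ.sup' univ_nonempty f :=
  calc ∑ x, f x * w x ≤ ∑ x, univ.sup' univ_nonempty f * w x :=
        sum_le_sum fun x _ => mul_le_mul_of_nonneg_right (le_sup' f (mem_univ x)) (hw x)
    _ = univ.sup' univ_nonempty f := by rw [← mul_sum, hw1, mul_one]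

lemma sum_sq_log_div_mul_le {X : Type*} [Fintype X] (Pi P : X → ℝ)
    (hPipos : ∀ x, 0 < Pi x) (hPisum : ∑ x, Pi x = 1)
    (hPpos : ∀ x, 0 < P x) (hPsum : ∑ x, P x = 1) :
    ∑ x, log (P x / Pi x) ^ 2 * Pi x ≤ ∑ x, Pi x / P x * Pi x - 1 :=
  calc ∑ x, log (P x / Pi x) ^ 2 * Pi x
      ≤ ∑ x, (P x / Pi x + (P x / Pi x)⁻¹ - 2) * Pi x :=
        sum_le_sum fun x _ => mul_le_mul_of_nonneg_right
          (sq_log_le_add_inv_sub_two (div_pos (hPpos x) (hPipos x))) (hPipos x).le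
    _ = ∑ x, (P x + Pi x / P x * Pi x - 2 * Pi x) := by
        refine sum_congr rfl fun x _ => ?_
        have hPi : Pi x ≠ 0 := (hPipos x).ne'
        field_simp
    _ = ∑ x, Pi x / P x * Pi x - 1 := by
        rw [sum_sub_distrib, sum_add_distrib, ← mul_sum, hPsum, hPisum]
        ring

/-- With `r x = P x / Pi x`, `α = max_x P x / Pi x` and
`β = max_x Pi x / P x`, one has `E[(log r)²] ≤ max {α, β²} - 1`. -/
theorem log_ratio_second_moment_bound {X : Type*} [Fintype X] [Nonempty X]
    (Pi P : X → ℝ)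
    (hPipos : ∀ x, 0 < Pi x) (hPisum : ∑ x, Pi x = 1)
    (hPpos : ∀ x, 0 < P x) (hPsum : ∑ x, P x = 1) :
    ∑ x, (Real.log (P x / Pi x)) ^ 2 * Pi x
      ≤ max (univ.sup' univ_nonempty (fun x => P x / Pi x))
            ((univ.sup' univ_nonempty (fun x => Pi x / P x)) ^ 2) - 1 := by
  set β := univ.sup' univ_nonempty (fun x => Pi x / P x)
  have hmean : ∑ x, Pi x / P x * Pi x ≤ β :=
    sum_mul_le_sup'_univ _ Pi (fun x => (hPipos x).le) hPisum
  have hβ : 1 ≤ β := by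
    have h := sum_mul_le_sup'_univ (fun x => Pi x / P x) P (fun x => (hPpos x).le) hPsum
    simpa only [fun x => div_mul_cancel₀ (Pi x) (hPpos x).ne', hPisum] using h
  calc ∑ x, log (P x / Pi x) ^ 2 * Pi x ≤ ∑ x, Pi x / P x * Pi x - 1 :=
        sum_sq_log_div_mul_le Pi P hPipos hPisum hPpos hPsum
    _ ≤ β ^ 2 - 1 := by nlinarith
    _ ≤ _ := by gcongr; exact le_max_right _ _
end

section
/- Let X be a finite nonempty set, let Π and P be full-support probability distributions on X, and let β = max_{x∈X} Π(x)/P(x). Then E_{Y∼Π}[(1 − Π(Y)/P(Y))²] = 1 + ∑_{x∈X} Π(x)³/P(x)² − 2·∑_{x∈X} Π(x)²/P(x) ≤ β² − 1. -/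
open Finset

/-! Write `r = Π / P`. Expanding the square, the second moment is `E_Π[r²] - 2 E_Π[r] + 1`.
Since `0 < r ≤ β`, `E_Π[r²] ≤ β²`, and `E_Π[r] = ∑ Π² / P ≥ (∑ Π)² / ∑ P = 1` by Cauchy–Schwarz
(Sedrakyan's form); together these give `β² - 2 + 1`. -/

section WeightedSums

variable {ι : Type*} (s : Finset ι)

theorem sum_one_sub_sq_mul {R : Type*} [CommRing R] (f w : ι → R) :
    ∑ i ∈ s, (1 - f i) ^ 2 * w i
      = ∑ i ∈ s, w i - 2 * ∑ i ∈ s, f i * w i + ∑ i ∈ s, f i ^ 2 * w i := by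
  rw [mul_sum, ← sum_sub_distrib, ← sum_add_distrib]
  exact sum_congr rfl fun i _ => by ring

theorem sum_sq_mul_le_sq_of_le {f w : ι → ℝ} {b : ℝ} (hf : ∀ i ∈ s, 0 ≤ f i)
    (hfb : ∀ i ∈ s, f i ≤ b) (hw : ∀ i ∈ s, 0 ≤ w i) (hw1 : ∑ i ∈ s, w i = 1) :
    ∑ i ∈ s, f i ^ 2 * w i ≤ b ^ 2 :=
  calc ∑ i ∈ s, f i ^ 2 * w i ≤ ∑ i ∈ s, b ^ 2 * w i :=
        sum_le_sum fun i hi => mul_le_mul_of_nonneg_right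
          (pow_le_pow_left₀ (hf i hi) (hfb i hi) 2) (hw i hi)
    _ = b ^ 2 := by rw [← mul_sum, hw1, mul_one]

end WeightedSums

theorem div_mul_self_eq {K : Type*} [Field K] (a b : K) : a / b * a = a ^ 2 / b := by
  rw [div_mul_eq_mul_div, sq]

theorem div_sq_mul_self_eq {K : Type*} [Field K] (a b : K) : (a / b) ^ 2 * a = a ^ 3 / b ^ 2 := by
  rw [div_pow, div_mul_eq_mul_div, ← pow_succ]

/-- With `β = max_x Pi x / P x`, one has
`E_{Y∼Pi}[(1 - Pi Y / P Y)²] = 1 + ∑_x Pi x³ / P x² - 2 ∑_x Pi x² / P x ≤ β² - 1`. -/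
theorem inverse_ratio_second_moment {X : Type*} [Fintype X] [Nonempty X]
    (Pi P : X → ℝ)
    (hPipos : ∀ x, 0 < Pi x) (hPisum : ∑ x, Pi x = 1)
    (hPpos : ∀ x, 0 < P x) (hPsum : ∑ x, P x = 1) :
    (∑ x, (1 - Pi x / P x) ^ 2 * Pi x
        = 1 + (∑ x, Pi x ^ 3 / P x ^ 2) - 2 * ∑ x, Pi x ^ 2 / P x) ∧
    ∑ x, (1 - Pi x / P x) ^ 2 * Pi x
        ≤ (univ.sup' univ_nonempty (fun x => Pi x / P x)) ^ 2 - 1 := by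
  have hexpand : ∑ x, (1 - Pi x / P x) ^ 2 * Pi x
      = 1 + (∑ x, Pi x ^ 3 / P x ^ 2) - 2 * ∑ x, Pi x ^ 2 / P x := by
    simp only [sum_one_sub_sq_mul, hPisum, div_mul_self_eq, div_sq_mul_self_eq]
    ring
  refine ⟨hexpand, ?_⟩
  have hmean : 1 ≤ ∑ x, Pi x ^ 2 / P x := by
    simpa [hPisum, hPsum] using sq_sum_div_le_sum_sq_div univ Pi fun x _ => hPpos x
  have hsecond : ∑ x, Pi x ^ 3 / P x ^ 2
      ≤ (univ.sup' univ_nonempty (fun x => Pi x / P x)) ^ 2 := by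
    simp only [← div_sq_mul_self_eq]
    exact sum_sq_mul_le_sq_of_le univ (fun x _ => (div_pos (hPipos x) (hPpos x)).le)
      (fun x hx => le_sup' (fun x => Pi x / P x) hx) (fun x _ => (hPipos x).le) hPisum
  linarith
end

section
/- Let X be a finite nonempty set, let Π and P be full-support probability distributions on X, set r(x) = P(x)/Π(x), α = max_{x∈X} P(x)/Π(x) and β = max_{x∈X} Π(x)/P(x). Then for every real λ ≥ 0, Var_{Y∼Π}[λ(r(Y) − 1) − log r(Y)] ≤ λ²(α − 1) + max{α − 1, β² − 1} + D_KL(Π‖P)² − 2λ·(D_KL(P‖Π) + D_KL(Π‖P)). -/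
open Finset

lemma sq_le_exp_sub_one {u : ℝ} (hu : 0 ≤ u) : u ^ 2 ≤ Real.exp u - 1 := by
  have h := Real.quadratic_le_exp_of_nonneg (by linarith : (0:ℝ) ≤ u / 2)
  have h2 : Real.exp (u/2) * Real.exp (u/2) = Real.exp u := by
    rw [← Real.exp_add]; ring_nf
  nlinarith [sq_nonneg (u - 2), sq_nonneg u, Real.exp_pos (u/2)]

lemma sq_log_le_sub_one {t : ℝ} (ht : 1 ≤ t) : Real.log t ^ 2 ≤ t - 1 := by
  have hlog : 0 ≤ Real.log t := Real.log_nonneg ht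
  have := sq_le_exp_sub_one hlog
  rwa [Real.exp_log (by linarith)] at this

/-- Kullback–Leibler divergence between two (full-support) distributions on a finite set. -/
noncomputable def KLdiv {X : Type*} [Fintype X] (P Q : X → ℝ) : ℝ :=
  ∑ x, P x * Real.log (P x / Q x)

/-- With `r x = P x / Pi x`, `α = max_x P x / Pi x` and
`β = max_x Pi x / P x`, for every real `λ ≥ 0`,
`Var_{Y∼Pi}[λ (r Y - 1) - log (r Y)]
  ≤ λ² (α - 1) + max {α - 1, β² - 1} + D_KL(Pi‖P)² - 2λ (D_KL(P‖Pi) + D_KL(Pi‖P))`. -/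
theorem single_sample_estimator_variance_bound {X : Type*} [Fintype X] [Nonempty X]
    (Pi P : X → ℝ)
    (hPipos : ∀ x, 0 < Pi x) (hPisum : ∑ x, Pi x = 1)
    (hPpos : ∀ x, 0 < P x) (hPsum : ∑ x, P x = 1)
    (lam : ℝ) (hlam : 0 ≤ lam) :
    (∑ x, (lam * (P x / Pi x - 1) - Real.log (P x / Pi x)) ^ 2 * Pi x)
      - (∑ x, (lam * (P x / Pi x - 1) - Real.log (P x / Pi x)) * Pi x) ^ 2
    ≤ lam ^ 2 * (univ.sup' univ_nonempty (fun x => P x / Pi x) - 1)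
      + max (univ.sup' univ_nonempty (fun x => P x / Pi x) - 1)
            ((univ.sup' univ_nonempty (fun x => Pi x / P x)) ^ 2 - 1)
      + KLdiv Pi P ^ 2
      - 2 * lam * (KLdiv P Pi + KLdiv Pi P) := by
  set r : X → ℝ := fun x => P x / Pi x with hr
  set α : ℝ := univ.sup' univ_nonempty (fun x => P x / Pi x) with hα
  set β : ℝ := univ.sup' univ_nonempty (fun x => Pi x / P x) with hβ
  have hrpos : ∀ x, 0 < r x := fun x => div_pos (hPpos x) (hPipos x)
  have hrle : ∀ x, r x ≤ α := fun x => le_sup' (fun x => P x / Pi x) (mem_univ x)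
  have hble : ∀ x, Pi x / P x ≤ β := fun x => le_sup' (fun x => Pi x / P x) (mem_univ x)
  have hβ1 : 1 ≤ β := by
    have h1 : ∀ x, Pi x ≤ β * P x := fun x => by
      have := hble x
      rw [div_le_iff₀ (hPpos x)] at this
      linarith [this]
    calc (1:ℝ) = ∑ x, Pi x := hPisum.symm
      _ ≤ ∑ x, β * P x := Finset.sum_le_sum fun x _ => h1 x
      _ = β := by rw [← Finset.mul_sum, hPsum, mul_one]
  -- basic sum identities
  have hrP : ∀ x, r x * Pi x = P x := fun x => div_mul_cancel₀ _ (hPipos x).ne'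
  have hS0 : ∑ x, (r x - 1) * Pi x = 0 := by
    have : ∀ x ∈ univ, (r x - 1) * Pi x = P x - Pi x := fun x _ => by
      rw [sub_mul, one_mul, hrP x]
    rw [Finset.sum_congr rfl this, Finset.sum_sub_distrib, hPsum, hPisum, sub_self]
  have hS1 : ∑ x, Real.log (r x) * Pi x = - KLdiv Pi P := by
    rw [KLdiv, ← Finset.sum_neg_distrib]
    refine Finset.sum_congr rfl fun x _ => ?_
    show Real.log (P x / Pi x) * Pi x = -(Pi x * Real.log (Pi x / P x))
    rw [Real.log_div (hPpos x).ne' (hPipos x).ne', Real.log_div (hPipos x).ne' (hPpos x).ne']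
    ring
  have hS2 : ∑ x, r x * Real.log (r x) * Pi x = KLdiv P Pi := by
    rw [KLdiv]
    refine Finset.sum_congr rfl fun x _ => ?_
    rw [mul_assoc, mul_comm (Real.log (r x)), ← mul_assoc, hrP x]
  have hA : ∑ x, (r x - 1) ^ 2 * Pi x ≤ α - 1 := by
    have key : ∀ x ∈ univ, (r x - 1) ^ 2 * Pi x = r x * P x - 2 * P x + Pi x := fun x _ => by
      linear_combination (r x - 2) * hrP x
    rw [Finset.sum_congr rfl key]
    rw [Finset.sum_add_distrib, Finset.sum_sub_distrib, ← Finset.mul_sum, hPsum, hPisum]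
    have : ∑ x, r x * P x ≤ ∑ x, α * P x :=
      Finset.sum_le_sum fun x _ => mul_le_mul_of_nonneg_right (hrle x) (hPpos x).le
    rw [← Finset.mul_sum, hPsum, mul_one] at this
    linarith
  have hC : ∑ x, Real.log (r x) ^ 2 * Pi x ≤ max (α - 1) (β ^ 2 - 1) := by
    have key : ∀ x ∈ univ, Real.log (r x) ^ 2 * Pi x ≤ max (α - 1) (β ^ 2 - 1) * Pi x := by
      intro x _
      refine mul_le_mul_of_nonneg_right ?_ (hPipos x).le
      rcases le_or_gt 1 (r x) with h | h
      · exact le_max_of_le_left ((sq_log_le_sub_one h).trans (by linarith [hrle x]))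
      · refine le_max_of_le_right ?_
        have hinv : 1 ≤ (r x)⁻¹ := (one_le_inv₀ (hrpos x)).2 h.le
        have h2 : Real.log ((r x)⁻¹) ^ 2 ≤ (r x)⁻¹ - 1 := sq_log_le_sub_one hinv
        rw [Real.log_inv, neg_sq] at h2
        have hinvβ : (r x)⁻¹ ≤ β := by
          rw [show (r x)⁻¹ = Pi x / P x by rw [hr]; field_simp]
          exact hble x
        have : β ≤ β ^ 2 := by nlinarith
        linarith
    calc ∑ x, Real.log (r x) ^ 2 * Pi x ≤ ∑ x, max (α - 1) (β ^ 2 - 1) * Pi x :=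
          Finset.sum_le_sum key
      _ = max (α - 1) (β ^ 2 - 1) := by rw [← Finset.mul_sum, hPisum, mul_one]
  -- expand the variance
  have hmean : ∑ x, (lam * (r x - 1) - Real.log (r x)) * Pi x = KLdiv Pi P := by
    have key : ∀ x ∈ univ, (lam * (r x - 1) - Real.log (r x)) * Pi x
        = lam * ((r x - 1) * Pi x) - Real.log (r x) * Pi x := fun x _ => by ring
    rw [Finset.sum_congr rfl key, Finset.sum_sub_distrib, ← Finset.mul_sum, hS0, hS1]
    ring
  have hsq : ∑ x, (lam * (r x - 1) - Real.log (r x)) ^ 2 * Pi x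
      = lam ^ 2 * (∑ x, (r x - 1) ^ 2 * Pi x)
        - 2 * lam * (KLdiv P Pi + KLdiv Pi P)
        + ∑ x, Real.log (r x) ^ 2 * Pi x := by
    have key : ∀ x ∈ univ, (lam * (r x - 1) - Real.log (r x)) ^ 2 * Pi x
        = lam ^ 2 * ((r x - 1) ^ 2 * Pi x)
          - 2 * lam * (r x * Real.log (r x) * Pi x - Real.log (r x) * Pi x)
          + Real.log (r x) ^ 2 * Pi x := fun x _ => by ring
    rw [Finset.sum_congr rfl key, Finset.sum_add_distrib, Finset.sum_sub_distrib,
      ← Finset.mul_sum, ← Finset.mul_sum, Finset.sum_sub_distrib, hS2, hS1]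
    ring
  rw [hmean, hsq]
  have h1 : lam ^ 2 * (∑ x, (r x - 1) ^ 2 * Pi x) ≤ lam ^ 2 * (α - 1) :=
    mul_le_mul_of_nonneg_left hA (sq_nonneg lam)
  have h2 : (0:ℝ) ≤ KLdiv Pi P ^ 2 := sq_nonneg _
  linarith [hC]
end

section
/- Let X be a finite nonempty set, let Π and P be full-support probability distributions on X, set r(x) = P(x)/Π(x), α = max_{x∈X} P(x)/Π(x) and β = max_{x∈X} Π(x)/P(x). Let T ≥ 1 be an integer, let x₁, …, x_T be independent random variables each distributed according to Π, let λ ≥ 0 be real, and let η be a square-integrable real-valued random variable independent of (x₁,…,x_T) with variance σ². Then Var[(1/T)·∑_{t=1}^{T} (λ(r(x_t) − 1) − log r(x_t)) + η] ≤ (λ²/T)(α − 1) + (1/T)(max{α − 1, β² − 1} + D_KL(Π‖P)²) − (2λ/T)·(D_KL(P‖Π) + D_KL(Π‖P)) + σ². (Variance bound for PRIEST-KLD under the fully trusted federated model.) -/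
open Finset MeasureTheory ProbabilityTheory

lemma two_mul_le_exp_sub (y : ℝ) (hy : 0 ≤ y) :
    2 * y ≤ Real.exp y - Real.exp (-y) := by
  set F : ℝ → ℝ := fun t => Real.exp t - Real.exp (-t) - 2 * t with hF
  have hd : ∀ t : ℝ, HasDerivAt F (Real.exp t + Real.exp (-t) - 2) t := by
    intro t
    have h1 : HasDerivAt (fun t : ℝ => Real.exp (-t)) (-Real.exp (-t)) t := by
      exact ((Real.hasDerivAt_exp (-t)).comp t (hasDerivAt_neg t)).congr_deriv (by ring)
    have h2 : HasDerivAt (fun t : ℝ => 2 * t) 2 t := by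
      simpa using (hasDerivAt_id t).const_mul (2 : ℝ)
    have := ((Real.hasDerivAt_exp t).sub h1).sub h2
    exact this.congr_deriv (by ring)
  have hmono : MonotoneOn F (Set.Ici (0:ℝ)) := by
    apply monotoneOn_of_deriv_nonneg (convex_Ici 0)
    · exact fun t _ => ((hd t).continuousAt).continuousWithinAt
    · exact fun t _ => ((hd t).differentiableAt).differentiableWithinAt
    · intro t _
      rw [(hd t).deriv]
      have h3 : 0 < Real.exp t := Real.exp_pos t
      have h4 : Real.exp (-t) = (Real.exp t)⁻¹ := Real.exp_neg t
      rw [h4]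
      have : Real.exp t + (Real.exp t)⁻¹ - 2 = (Real.exp t - 1)^2 / Real.exp t := by
        field_simp; ring
      rw [this]; positivity
  have h0 : F 0 ≤ F y := hmono (Set.self_mem_Ici) hy hy
  simp only [hF, Real.exp_zero, neg_zero, mul_zero, sub_self, sub_zero] at h0
  linarith [h0]

lemma sq_log_le {u : ℝ} (hu : 0 < u) : Real.log u ^ 2 ≤ u + u⁻¹ - 2 := by
  -- reduce to: ∀ y, y^2 ≤ exp y + exp (-y) - 2
  have key : ∀ y : ℝ, 0 ≤ y → y ^ 2 ≤ Real.exp y + Real.exp (-y) - 2 := by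
    intro y hy
    have h := two_mul_le_exp_sub (y / 2) (by linarith)
    have hy' : y ≤ Real.exp (y/2) - Real.exp (-(y/2)) := by linarith
    have e1 : Real.exp (y/2) * Real.exp (y/2) = Real.exp y := by
      rw [← Real.exp_add]; ring_nf
    have e2 : Real.exp (y/2) * Real.exp (-(y/2)) = 1 := by
      rw [← Real.exp_add]; simp
    have e3 : Real.exp (-(y/2)) * Real.exp (-(y/2)) = Real.exp (-y) := by
      rw [← Real.exp_add]; ring_nf
    nlinarith [mul_le_mul hy' hy' hy (by linarith : 0 ≤ Real.exp (y/2) - Real.exp (-(y/2)))]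
  have keyall : ∀ y : ℝ, y ^ 2 ≤ Real.exp y + Real.exp (-y) - 2 := by
    intro y
    rcases le_total 0 y with hy | hy
    · exact key y hy
    · have := key (-y) (by linarith)
      simpa [neg_neg, add_comm] using this
  have h := keyall (Real.log u)
  rwa [Real.exp_log hu, ← Real.log_inv, Real.exp_log (inv_pos.mpr hu)] at h

lemma key_bound {X : Type*} [Fintype X] [Nonempty X] (Pi P : X → ℝ)
    (hPipos : ∀ x, 0 < Pi x) (hPisum : ∑ x, Pi x = 1)
    (hPpos : ∀ x, 0 < P x) (hPsum : ∑ x, P x = 1)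
    (lam : ℝ) (hlam : 0 ≤ lam) :
    (∑ x, Pi x * (lam * (P x / Pi x - 1) - Real.log (P x / Pi x)) ^ 2)
      - (∑ x, Pi x * (lam * (P x / Pi x - 1) - Real.log (P x / Pi x))) ^ 2
    ≤ lam ^ 2 * (univ.sup' univ_nonempty (fun x => P x / Pi x) - 1)
      + (max (univ.sup' univ_nonempty (fun x => P x / Pi x) - 1)
          ((univ.sup' univ_nonempty (fun x => Pi x / P x)) ^ 2 - 1) + KLdiv Pi P ^ 2)
      - 2 * lam * (KLdiv P Pi + KLdiv Pi P) := by
  set α := univ.sup' univ_nonempty (fun x => P x / Pi x) with hα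
  set β := univ.sup' univ_nonempty (fun x => Pi x / P x) with hβ
  set r : X → ℝ := fun x => P x / Pi x with hr
  set L : X → ℝ := fun x => Real.log (r x) with hL
  have hrpos : ∀ x, 0 < r x := fun x => div_pos (hPpos x) (hPipos x)
  have hPir : ∀ x, Pi x * r x = P x := fun x => by
    rw [hr]; rw [mul_comm, div_mul_cancel₀ _ (hPipos x).ne']
  -- basic sums
  have S1 : ∑ x, Pi x * r x = 1 := by
    rw [Finset.sum_congr rfl fun x _ => hPir x]; exact hPsum
  have S2le : ∑ x, Pi x * r x ^ 2 ≤ α := by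
    calc ∑ x, Pi x * r x ^ 2 = ∑ x, P x * r x := by
          refine Finset.sum_congr rfl fun x _ => ?_
          rw [pow_two, ← mul_assoc, hPir x]
      _ ≤ ∑ x, P x * α := by
          refine Finset.sum_le_sum fun x _ => ?_
          exact mul_le_mul_of_nonneg_left (Finset.le_sup' _ (mem_univ x)) (hPpos x).le
      _ = α := by rw [← Finset.sum_mul, hPsum, one_mul]
  have SL : ∑ x, Pi x * L x = - KLdiv Pi P := by
    rw [KLdiv, ← Finset.sum_neg_distrib]
    refine Finset.sum_congr rfl fun x _ => ?_
    show Pi x * Real.log (P x / Pi x) = -(Pi x * Real.log (Pi x / P x))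
    rw [Real.log_div (hPpos x).ne' (hPipos x).ne',
      Real.log_div (hPipos x).ne' (hPpos x).ne']
    ring
  have SRL : ∑ x, Pi x * (r x * L x) = KLdiv P Pi := by
    rw [KLdiv]
    refine Finset.sum_congr rfl fun x _ => ?_
    rw [← mul_assoc, hPir x]
  have SL2le : ∑ x, Pi x * L x ^ 2 ≤ β - 1 := by
    have step : ∀ x, Pi x * L x ^ 2 ≤ P x + Pi x * β - 2 * Pi x := by
      intro x
      have h1 : Pi x * L x ^ 2 ≤ Pi x * (r x + (r x)⁻¹ - 2) :=
        mul_le_mul_of_nonneg_left (sq_log_le (hrpos x)) (hPipos x).le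
      have h2 : (r x)⁻¹ = Pi x / P x := by rw [hr, inv_div]
      have hxβ : Pi x / P x ≤ β := by
        rw [hβ]; exact Finset.le_sup' (fun x => Pi x / P x) (mem_univ x)
      have h3 : Pi x * (Pi x / P x) ≤ Pi x * β :=
        mul_le_mul_of_nonneg_left hxβ (hPipos x).le
      have h4 : Pi x * (r x + (r x)⁻¹ - 2) = P x + Pi x * (Pi x / P x) - 2 * Pi x := by
        rw [h2, mul_sub, mul_add, hPir x]; ring
      linarith [h1, h3, h4.le, h4.ge]
    calc ∑ x, Pi x * L x ^ 2 ≤ ∑ x, (P x + Pi x * β - 2 * Pi x) :=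
          Finset.sum_le_sum fun x _ => step x
      _ = β - 1 := by
          rw [Finset.sum_sub_distrib, Finset.sum_add_distrib, ← Finset.sum_mul,
            ← Finset.mul_sum, hPsum, hPisum]
          ring
  have hβ1 : 1 ≤ β := by
    by_contra hcon
    push_neg at hcon
    have hall : ∀ x, Pi x < P x := by
      intro x
      have := lt_of_le_of_lt (Finset.le_sup' (fun x => Pi x / P x) (mem_univ x)) hcon
      rw [div_lt_one (hPpos x)] at this
      exact this
    have : ∑ x, Pi x < ∑ x, P x :=
      Finset.sum_lt_sum_of_nonempty univ_nonempty fun x _ => hall x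
    rw [hPisum, hPsum] at this
    exact lt_irrefl _ this
  -- expectation of f
  have Ef : ∑ x, Pi x * (lam * (r x - 1) - L x) = KLdiv Pi P := by
    calc ∑ x, Pi x * (lam * (r x - 1) - L x)
        = ∑ x, (lam * (Pi x * r x) - lam * Pi x - Pi x * L x) :=
          Finset.sum_congr rfl fun x _ => by ring
      _ = lam * (∑ x, Pi x * r x) - lam * (∑ x, Pi x) - ∑ x, Pi x * L x := by
          rw [Finset.sum_sub_distrib, Finset.sum_sub_distrib, ← Finset.mul_sum,
            ← Finset.mul_sum]
      _ = KLdiv Pi P := by rw [S1, hPisum, SL]; ring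
  have Ef2 : ∑ x, Pi x * (lam * (r x - 1) - L x) ^ 2
      = lam ^ 2 * (∑ x, Pi x * r x ^ 2) + lam ^ 2 * (∑ x, Pi x)
        - 2 * lam ^ 2 * (∑ x, Pi x * r x) - 2 * lam * (∑ x, Pi x * (r x * L x))
        + 2 * lam * (∑ x, Pi x * L x) + (∑ x, Pi x * L x ^ 2) := by
    simp only [Finset.mul_sum]
    rw [← Finset.sum_add_distrib, ← Finset.sum_sub_distrib, ← Finset.sum_sub_distrib,
      ← Finset.sum_add_distrib, ← Finset.sum_add_distrib]
    refine Finset.sum_congr rfl fun x _ => ?_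
    ring
  rw [Ef, Ef2, S1, SRL, SL, hPisum]
  have h1 : lam ^ 2 * (∑ x, Pi x * r x ^ 2) ≤ lam ^ 2 * α :=
    mul_le_mul_of_nonneg_left S2le (sq_nonneg lam)
  have h2 : β - 1 ≤ max (α - 1) (β ^ 2 - 1) := by
    have : β - 1 ≤ β ^ 2 - 1 := by nlinarith
    exact le_trans this (le_max_right _ _)
  have h3 : (0:ℝ) ≤ KLdiv Pi P ^ 2 := sq_nonneg _
  linarith [SL2le]

lemma integral_comp_law {X : Type*} [Fintype X] [MeasurableSpace X] [MeasurableSingletonClass X]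
    {Ω : Type*} [MeasureSpace Ω] [IsProbabilityMeasure (ℙ : Measure Ω)]
    (Pi : X → ℝ) (hPipos : ∀ x, 0 < Pi x)
    (g : Ω → X) (hg : Measurable g)
    (hlaw : ∀ x, (ℙ : Measure Ω) (g ⁻¹' {x}) = ENNReal.ofReal (Pi x))
    (φ : X → ℝ) : ∫ ω, φ (g ω) ∂ℙ = ∑ x, Pi x * φ x := by
  rw [← integral_map hg.aemeasurable (measurable_of_finite φ).aestronglyMeasurable]
  haveI : IsProbabilityMeasure ((ℙ : Measure Ω).map g) :=
    Measure.isProbabilityMeasure_map hg.aemeasurable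
  rw [integral_fintype]
  refine Finset.sum_congr rfl fun x _ => ?_
  rw [measureReal_def, Measure.map_apply hg (measurableSet_singleton x), hlaw x, smul_eq_mul,
    ENNReal.toReal_ofReal (hPipos x).le]
  exact Integrable.of_finite

/-- Variance bound for PRIEST-KLD under the fully trusted federated model:
with `x₁, …, x_T` i.i.d. with law `Pi`, `λ ≥ 0`, and square-integrable noise `η` independent
of `(x₁, …, x_T)` with variance `σ²`, the variance of
`(1/T) ∑ₜ (λ (r(xₜ) - 1) - log r(xₜ)) + η` is at most
`(λ²/T)(α - 1) + (1/T)(max {α - 1, β² - 1} + D_KL(Pi‖P)²)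
  - (2λ/T)(D_KL(P‖Pi) + D_KL(Pi‖P)) + σ²`. -/
theorem trusted_estimator_variance_bound {X : Type*} [Fintype X] [Nonempty X]
    [MeasurableSpace X] [MeasurableSingletonClass X]
    (Pi P : X → ℝ)
    (hPipos : ∀ x, 0 < Pi x) (hPisum : ∑ x, Pi x = 1)
    (hPpos : ∀ x, 0 < P x) (hPsum : ∑ x, P x = 1)
    (T : ℕ) (hT : 1 ≤ T)
    {Ω : Type*} [MeasureSpace Ω] [IsProbabilityMeasure (ℙ : Measure Ω)]
    (xs : Fin T → Ω → X) (hmeas : ∀ t, Measurable (xs t))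
    (hindep : iIndepFun xs ℙ)
    (hlaw : ∀ t x, (ℙ : Measure Ω) (xs t ⁻¹' {x}) = ENNReal.ofReal (Pi x))
    (lam : ℝ) (hlam : 0 ≤ lam)
    (η : Ω → ℝ) (hη : MemLp η 2 ℙ)
    (hηindep : IndepFun (fun ω => (fun t => xs t ω)) η ℙ)
    (σ2 : ℝ) (hσ2 : variance η ℙ = σ2) :
    variance (fun ω => (1 / (T : ℝ)) * ∑ t : Fin T,
        (lam * (P (xs t ω) / Pi (xs t ω) - 1) - Real.log (P (xs t ω) / Pi (xs t ω)))
      + η ω) ℙ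
    ≤ (lam ^ 2 / T) * (univ.sup' univ_nonempty (fun x => P x / Pi x) - 1)
      + (1 / (T : ℝ)) * (max (univ.sup' univ_nonempty (fun x => P x / Pi x) - 1)
            ((univ.sup' univ_nonempty (fun x => Pi x / P x)) ^ 2 - 1)
          + KLdiv Pi P ^ 2)
      - (2 * lam / T) * (KLdiv P Pi + KLdiv Pi P) + σ2 := by
  set f : X → ℝ := fun x => lam * (P x / Pi x - 1) - Real.log (P x / Pi x) with hfdef
  set g : Fin T → Ω → ℝ := fun t ω => f (xs t ω) with hgdef
  have hgmeas : ∀ t, Measurable (g t) := fun t => (measurable_of_finite f).comp (hmeas t)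
  have hgmem : ∀ t, MemLp (g t) 2 ℙ := by
    intro t
    refine MemLp.of_bound (hgmeas t).aestronglyMeasurable
      (univ.sup' univ_nonempty fun x => ‖f x‖) (ae_of_all _ fun ω => ?_)
    exact Finset.le_sup' (fun x => ‖f x‖) (mem_univ (xs t ω))
  have hSmem : MemLp (∑ t, g t) 2 ℙ := memLp_finset_sum' _ fun t _ => hgmem t
  -- rewrite the function
  have hfun : (fun ω => (1 / (T : ℝ)) * ∑ t : Fin T,
        (lam * (P (xs t ω) / Pi (xs t ω) - 1) - Real.log (P (xs t ω) / Pi (xs t ω)))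
      + η ω) = ((1 / (T : ℝ)) • (∑ t, g t)) + η := by
    funext ω
    simp [g, f, Finset.sum_apply, smul_eq_mul]
  -- independence of the scaled sum and η
  have hindepSη : IndepFun ((1 / (T : ℝ)) • (∑ t, g t)) η ℙ := by
    have hΦ : Measurable (fun v : Fin T → X => (1 / (T : ℝ)) * ∑ t, f (v t)) := by
      apply Measurable.const_mul
      exact Finset.measurable_sum _ fun t _ =>
        (measurable_of_finite f).comp (measurable_pi_apply t)
    have heq : ((1 / (T : ℝ)) • (∑ t, g t))
        = (fun v : Fin T → X => (1 / (T : ℝ)) * ∑ t, f (v t)) ∘ (fun ω => fun t => xs t ω) := by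
      funext ω
      simp [g, Finset.sum_apply, smul_eq_mul]
    rw [heq]
    exact hηindep.comp hΦ measurable_id
  rw [hfun, IndepFun.variance_add (hSmem.const_smul _) hη hindepSη, hσ2, variance_smul]
  -- variance of the sum
  have hpair : Set.Pairwise ↑(univ : Finset (Fin T)) fun i j => IndepFun (g i) (g j) ℙ :=
    fun i _ j _ hij =>
      (hindep.comp (fun _ => f) (fun _ => measurable_of_finite f)).indepFun hij
  rw [IndepFun.variance_sum (fun t _ => hgmem t) hpair]
  set V : ℝ := (∑ x, Pi x * f x ^ 2) - (∑ x, Pi x * f x) ^ 2 with hVdef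
  have hvar : ∀ t, variance (g t) ℙ = V := by
    intro t
    rw [variance_eq_sub (hgmem t)]
    have h1 : ∫ ω, (g t ^ 2) ω ∂ℙ = ∑ x, Pi x * f x ^ 2 := by
      have := integral_comp_law Pi hPipos (xs t) (hmeas t) (hlaw t) (fun x => f x ^ 2)
      simpa [g] using this
    have h2 : ∫ ω, g t ω ∂ℙ = ∑ x, Pi x * f x :=
      integral_comp_law Pi hPipos (xs t) (hmeas t) (hlaw t) f
    rw [h1, h2]
  have hsum : ∑ t : Fin T, variance (g t) ℙ = (T : ℝ) * V := by
    rw [Finset.sum_congr rfl fun t _ => hvar t, Finset.sum_const, card_univ,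
      Fintype.card_fin, nsmul_eq_mul]
  rw [hsum]
  have hTpos : (0 : ℝ) < T := by
    have : (0 : ℕ) < T := lt_of_lt_of_le Nat.one_pos hT
    exact_mod_cast this
  have hkey : V ≤ lam ^ 2 * ((univ.sup' univ_nonempty fun x => P x / Pi x) - 1)
      + (max ((univ.sup' univ_nonempty fun x => P x / Pi x) - 1)
          ((univ.sup' univ_nonempty fun x => Pi x / P x) ^ 2 - 1) + KLdiv Pi P ^ 2)
      - 2 * lam * (KLdiv P Pi + KLdiv Pi P) :=
    key_bound Pi P hPipos hPisum hPpos hPsum lam hlam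
  have h3 : (1 / (T : ℝ)) ^ 2 * ((T : ℝ) * V) = V / T := by
    field_simp
  rw [h3]
  have h4 : V / (T : ℝ) ≤ (lam ^ 2 * ((univ.sup' univ_nonempty fun x => P x / Pi x) - 1)
      + (max ((univ.sup' univ_nonempty fun x => P x / Pi x) - 1)
          ((univ.sup' univ_nonempty fun x => Pi x / P x) ^ 2 - 1) + KLdiv Pi P ^ 2)
      - 2 * lam * (KLdiv P Pi + KLdiv Pi P)) / (T : ℝ) := by
    gcongr
  refine le_trans (add_le_add_left h4 σ2) (le_of_eq ?_)
  ring
end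

section
/- Let X be a finite nonempty set, let Π and P be full-support probability distributions on X, and set α = max_{x∈X} P(x)/Π(x) and β = max_{x∈X} Π(x)/P(x). Then D_KL(P‖Π) + D_KL(Π‖P) ≤ (β/α)·(α − 1/β)²/4 + (α/β)·(β − 1/α)²/4 = (αβ − 1)²/(2αβ). -/
/-!
With `r = P / Pi`, the symmetrised divergence is the `Pi`-expectation of the convex function
`(r - 1) log r`, where `r` has mean `1` and takes values in `[1/β, α]`. Convexity bounds it by the
chord through the endpoints, evaluated at `1`: this is `(α - 1)(β - 1) log(αβ) / (αβ - 1)`.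
Then `log t ≤ (t - 1)/√t` (which is `log u ≤ sinh (log u)` at `u = √t`) and AM-GM,
`(α - 1)(β - 1) ≤ (√(αβ) - 1)²`, bound this by `(αβ - 1)²/(2αβ)`.
-/

open Finset

open Real

theorem Real.log_le_sub_one_div_sqrt {t : ℝ} (ht : 1 ≤ t) : log t ≤ (t - 1) / √t := by
  have hs : 0 < √t := by positivity
  have hlog : log √t ≤ sinh (log √t) :=
    self_le_sinh_iff.2 (log_nonneg (one_le_sqrt.2 ht))
  rw [sinh_log hs] at hlog
  calc log t = 2 * log √t := by rw [← log_rpow hs, rpow_two, sq_sqrt (by positivity)]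
    _ ≤ √t - (√t)⁻¹ := by linarith
    _ = (t - 1) / √t := by field_simp; rw [sq_sqrt (by positivity)]

theorem sub_one_mul_sub_one_mul_log_le {a b : ℝ} (ha : 1 ≤ a) (hb : 1 ≤ b) :
    (a - 1) * (b - 1) * log (a * b) ≤ (a * b - 1) ^ 3 / (2 * (a * b)) := by
  have hab : 1 ≤ a * b := one_le_mul_of_one_le_of_one_le ha hb
  obtain ⟨s, hs1, hs2, hlog⟩ : ∃ s, 1 ≤ s ∧ s ^ 2 = a * b ∧ log (a * b) ≤ (a * b - 1) / s :=
    ⟨√(a * b), one_le_sqrt.2 hab, sq_sqrt (by positivity), log_le_sub_one_div_sqrt hab⟩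
  have hamgm : 2 * s ≤ a + b := by nlinarith [sq_nonneg (a - b)]
  have hlog0 := log_nonneg hab
  rw [← hs2] at hlog hlog0 ⊢
  calc (a - 1) * (b - 1) * log (s ^ 2) ≤ (s - 1) ^ 2 * ((s ^ 2 - 1) / s) := by
        exact mul_le_mul (by nlinarith) hlog hlog0 (sq_nonneg _)
    _ ≤ (s ^ 2 - 1) ^ 3 / (2 * s ^ 2) := by
        rw [mul_div_assoc', div_le_div_iff₀ (by positivity) (by positivity)]
        have hs21 : 0 ≤ s ^ 2 - 1 := by nlinarith
        nlinarith [mul_nonneg (mul_nonneg (sq_nonneg (s - 1)) hs21)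
          (by positivity : (0:ℝ) ≤ s * (s ^ 2 + 1))]

theorem convexOn_sub_one_mul_log : ConvexOn ℝ (Set.Ioi 0) fun r : ℝ => (r - 1) * log r := by
  have h := (convexOn_mul_log.subset Set.Ioi_subset_Ici_self (convex_Ioi 0)).add
    strictConcaveOn_log_Ioi.concaveOn.neg
  have hfun : (fun r : ℝ => (r - 1) * log r) = fun r => r * log r + -log r := by
    ext r
    ring
  rw [hfun]
  exact h

theorem ConvexOn.sub_mul_le_chord {s : Set ℝ} {f : ℝ → ℝ} (hf : ConvexOn ℝ s f) {a b x : ℝ}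
    (ha : a ∈ s) (hb : b ∈ s) (hx : x ∈ Set.Icc a b) :
    (b - a) * f x ≤ (b - x) * f a + (x - a) * f b := by
  rcases hx.1.eq_or_lt with rfl | hax
  · linarith
  rcases hx.2.eq_or_lt with rfl | hxb
  · linarith
  exact hf.secant_mono_aux1 ha hb hax hxb

theorem ConvexOn.sub_mul_sum_le_chord {ι : Type*} {s : Set ℝ} {f : ℝ → ℝ} (hf : ConvexOn ℝ s f)
    {t : Finset ι} {w r : ι → ℝ} (hw : ∀ i ∈ t, 0 ≤ w i) (hw1 : ∑ i ∈ t, w i = 1)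
    {a b : ℝ} (ha : a ∈ s) (hb : b ∈ s) (hr : ∀ i ∈ t, r i ∈ Set.Icc a b) :
    (b - a) * ∑ i ∈ t, w i * f (r i)
      ≤ (b - ∑ i ∈ t, w i * r i) * f a + (∑ i ∈ t, w i * r i - a) * f b := by
  calc (b - a) * ∑ i ∈ t, w i * f (r i) = ∑ i ∈ t, w i * ((b - a) * f (r i)) := by
        rw [mul_sum]; exact sum_congr rfl fun i _ => by ring
    _ ≤ ∑ i ∈ t, w i * ((b - r i) * f a + (r i - a) * f b) :=
        sum_le_sum fun i hi =>
          mul_le_mul_of_nonneg_left (hf.sub_mul_le_chord ha hb (hr i hi)) (hw i hi)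
    _ = (b - ∑ i ∈ t, w i * r i) * f a + (∑ i ∈ t, w i * r i - a) * f b := by
        have hlin : ∀ i, w i * ((b - r i) * f a + (r i - a) * f b)
            = (b * f a - a * f b) * w i + (f b - f a) * (w i * r i) := fun i => by ring
        simp only [hlin, sum_add_distrib, ← mul_sum, hw1]
        ring

theorem sum_mul_sub_one_mul_log_le {ι : Type*} {t : Finset ι} {w r : ι → ℝ}
    (hw : ∀ i ∈ t, 0 ≤ w i) (hw1 : ∑ i ∈ t, w i = 1) (hmean : ∑ i ∈ t, w i * r i = 1)
    {a b : ℝ} (ha : 1 ≤ a) (hb : 1 ≤ b) (hr : ∀ i ∈ t, r i ∈ Set.Icc b⁻¹ a) :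
    ∑ i ∈ t, w i * ((r i - 1) * log (r i)) ≤ (a * b - 1) ^ 2 / (2 * (a * b)) := by
  have hb0 : 0 < b := by linarith
  rcases (one_le_mul_of_one_le_of_one_le ha hb).eq_or_lt with hab | hab
  · obtain ⟨rfl, rfl⟩ : a = 1 ∧ b = 1 := ⟨by nlinarith, by nlinarith⟩
    have hr1 : ∀ i ∈ t, r i = 1 := fun i hi => by simpa using hr i hi
    rw [sum_eq_zero fun i hi => by rw [hr1 i hi]; simp]
    norm_num
  · have hchord := convexOn_sub_one_mul_log.sub_mul_sum_le_chord hw hw1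
      (Set.mem_Ioi.2 (inv_pos.2 hb0)) (Set.mem_Ioi.2 (by linarith : (0:ℝ) < a)) hr
    rw [hmean] at hchord
    have key : (a * b - 1) * ∑ i ∈ t, w i * ((r i - 1) * log (r i))
        ≤ (a * b - 1) * ((a * b - 1) ^ 2 / (2 * (a * b))) :=
      calc (a * b - 1) * ∑ i ∈ t, w i * ((r i - 1) * log (r i))
          = b * ((a - b⁻¹) * ∑ i ∈ t, w i * ((r i - 1) * log (r i))) := by
            field_simp
        _ ≤ b * ((a - 1) * ((b⁻¹ - 1) * log b⁻¹) + (1 - b⁻¹) * ((a - 1) * log a)) := by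
            gcongr
        _ = (a - 1) * (b - 1) * log (a * b) := by
            rw [log_inv, log_mul (by linarith) hb0.ne']
            field_simp
            ring
        _ ≤ (a * b - 1) ^ 3 / (2 * (a * b)) := sub_one_mul_sub_one_mul_log_le ha hb
        _ = (a * b - 1) * ((a * b - 1) ^ 2 / (2 * (a * b))) := by ring
    exact le_of_mul_le_mul_left key (by linarith)

theorem KLdiv_add_KLdiv {X : Type*} [Fintype X] {P Q : X → ℝ} (hQ : ∀ x, 0 < Q x) :
    KLdiv P Q + KLdiv Q P = ∑ x, Q x * ((P x / Q x - 1) * log (P x / Q x)) := by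
  rw [KLdiv, KLdiv, ← sum_add_distrib]
  refine sum_congr rfl fun x _ => ?_
  rw [← inv_div, log_inv]
  field_simp [(hQ x).ne']
  ring

theorem one_le_sup'_div {X : Type*} [Fintype X] [Nonempty X] {P Q : X → ℝ}
    (hQ : ∀ x, 0 < Q x) (h : ∑ x, Q x ≤ ∑ x, P x) :
    1 ≤ univ.sup' univ_nonempty fun x => P x / Q x := by
  obtain ⟨x, hx, hQP⟩ := exists_le_of_sum_le univ_nonempty h
  exact le_sup'_of_le _ hx ((one_le_div (hQ x)).2 hQP)

/-- With `α = max_x P x / Pi x` and `β = max_x Pi x / P x`,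
`D_KL(P‖Pi) + D_KL(Pi‖P) ≤ (β/α)(α - 1/β)²/4 + (α/β)(β - 1/α)²/4 = (αβ - 1)²/(2αβ)`. -/
theorem symmetric_KL_upper_bound {X : Type*} [Fintype X] [Nonempty X]
    (Pi P : X → ℝ)
    (hPipos : ∀ x, 0 < Pi x) (hPisum : ∑ x, Pi x = 1)
    (hPpos : ∀ x, 0 < P x) (hPsum : ∑ x, P x = 1) :
    (KLdiv P Pi + KLdiv Pi P
      ≤ (univ.sup' univ_nonempty (fun x => Pi x / P x)
            / univ.sup' univ_nonempty (fun x => P x / Pi x))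
          * (univ.sup' univ_nonempty (fun x => P x / Pi x)
              - 1 / univ.sup' univ_nonempty (fun x => Pi x / P x)) ^ 2 / 4
        + (univ.sup' univ_nonempty (fun x => P x / Pi x)
            / univ.sup' univ_nonempty (fun x => Pi x / P x))
          * (univ.sup' univ_nonempty (fun x => Pi x / P x)
              - 1 / univ.sup' univ_nonempty (fun x => P x / Pi x)) ^ 2 / 4) ∧
    ((univ.sup' univ_nonempty (fun x => Pi x / P x)
          / univ.sup' univ_nonempty (fun x => P x / Pi x))
        * (univ.sup' univ_nonempty (fun x => P x / Pi x)
            - 1 / univ.sup' univ_nonempty (fun x => Pi x / P x)) ^ 2 / 4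
      + (univ.sup' univ_nonempty (fun x => P x / Pi x)
          / univ.sup' univ_nonempty (fun x => Pi x / P x))
        * (univ.sup' univ_nonempty (fun x => Pi x / P x)
            - 1 / univ.sup' univ_nonempty (fun x => P x / Pi x)) ^ 2 / 4
      = (univ.sup' univ_nonempty (fun x => P x / Pi x)
            * univ.sup' univ_nonempty (fun x => Pi x / P x) - 1) ^ 2
        / (2 * (univ.sup' univ_nonempty (fun x => P x / Pi x)
            * univ.sup' univ_nonempty (fun x => Pi x / P x)))) := by
  set α := univ.sup' univ_nonempty fun x => P x / Pi x
  set β := univ.sup' univ_nonempty fun x => Pi x / P x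
  have hα : 1 ≤ α := one_le_sup'_div hPipos (by rw [hPisum, hPsum])
  have hβ : 1 ≤ β := one_le_sup'_div hPpos (by rw [hPisum, hPsum])
  have hratio : ∀ x ∈ univ, P x / Pi x ∈ Set.Icc β⁻¹ α := fun x hx =>
    ⟨inv_le_of_inv_le₀ (div_pos (hPpos x) (hPipos x))
        (by rw [inv_div]; exact le_sup' (fun x => Pi x / P x) hx),
      le_sup' (fun x => P x / Pi x) hx⟩
  have hmean : ∑ x, Pi x * (P x / Pi x) = 1 := by
    rw [← hPsum]
    exact sum_congr rfl fun x _ => mul_div_cancel₀ _ (hPipos x).ne'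
  have hsplit : β / α * (α - 1 / β) ^ 2 / 4 + α / β * (β - 1 / α) ^ 2 / 4
      = (α * β - 1) ^ 2 / (2 * (α * β)) := by
    field_simp
    ring
  refine ⟨?_, hsplit⟩
  rw [hsplit, KLdiv_add_KLdiv hPipos]
  exact sum_mul_sub_one_mul_log_le (fun x _ => (hPipos x).le) hPisum hmean hα hβ hratio
end

section
/- Let X be a finite nonempty set, let Π and P be full-support probability distributions on X, set r(x) = P(x)/Π(x), α = max_{x∈X} P(x)/Π(x) and β = max_{x∈X} Π(x)/P(x). Let T ≥ 1 be an integer, let x₁, …, x_T be independent random variables each distributed according to Π, let λ ≥ 0 be real, and let η′ be a square-integrable real-valued random variable independent of (x₁,…,x_T) with variance σ′². Then Var[(1/T)·∑_{t=1}^{T}(λ(r(x_t) − 1) − log r(x_t)) + 2η′/T] ≤ (λ²/T)(α − 1) + (1/T)(max{α − 1, β² − 1} + D_KL(Π‖P)²) − (2λ/T)·(D_KL(P‖Π) + D_KL(Π‖P)) + 4σ′²/T². (Variance bound for PRIEST-KLD under the trusted aggregator model.) -/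
open Finset MeasureTheory ProbabilityTheory

/-!
Write `r = P / Π` and `f = λ (r - 1) - log r`, so that the estimator is the sample mean of
`f (xₜ)` plus the independent noise `2η'/T`. Its variance is therefore at most
`E_Π[f²] / T + 4σ'²/T²`. Expanding the square,
`E_Π[f²] = λ² E_Π[(r - 1)²] - 2λ E_Π[(r - 1) log r] + E_Π[(log r)²]`, where
`E_Π[(r - 1)²] = E_P[r] - 1 ≤ α - 1`, the cross term is exactly `D_KL(P‖Π) + D_KL(Π‖P)`, and
`(log r)² ≤ r + r⁻¹ - 2` gives `E_Π[(log r)²] ≤ E_Π[r⁻¹] - 1 ≤ β - 1 ≤ β² - 1`; the remaining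
term `D_KL(Π‖P)² / T` of the bound is nonnegative.
-/

namespace Real

theorem sq_le_sinh_sq (y : ℝ) : y ^ 2 ≤ sinh y ^ 2 :=
  sq_le_sq.2 <| (abs_sinh y).symm ▸ self_le_sinh_iff.2 (abs_nonneg y)

theorem log_sq_le_add_inv_sub_two {r : ℝ} (hr : 0 < r) : log r ^ 2 ≤ r + r⁻¹ - 2 := by
  set y := log r / 2
  have hexp : exp y ^ 2 = r := by rw [sq, ← exp_add, add_halves, exp_log hr]
  have hexp_neg : exp (-y) ^ 2 = r⁻¹ := by
    rw [sq, ← exp_add, ← neg_add, add_halves, exp_neg, exp_log hr]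
  have hprod : exp y * exp (-y) = 1 := by rw [← exp_add, add_neg_cancel, exp_zero]
  calc log r ^ 2 = 4 * y ^ 2 := by ring
    _ ≤ 4 * sinh y ^ 2 := mul_le_mul_of_nonneg_left (sq_le_sinh_sq y) (by norm_num)
    _ = r + r⁻¹ - 2 := by rw [sinh_eq]; linear_combination hexp + hexp_neg - 2 * hprod

end Real

section Divergences

variable {X : Type*} [Fintype X]

theorem sum_mul_le_sup'_of_sum_eq_one [Nonempty X] {w : X → ℝ} (hw : ∀ x, 0 ≤ w x)
    (hw_sum : ∑ x, w x = 1) (g : X → ℝ) : ∑ x, w x * g x ≤ univ.sup' univ_nonempty g :=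
  calc ∑ x, w x * g x ≤ ∑ x, w x * univ.sup' univ_nonempty g :=
        sum_le_sum fun x _ => mul_le_mul_of_nonneg_left (le_sup' g (mem_univ x)) (hw x)
    _ = univ.sup' univ_nonempty g := by rw [← sum_mul, hw_sum, one_mul]

theorem one_le_sup'_div_of_sum_eq [Nonempty X] {P Q : X → ℝ} (hP : ∀ x, 0 < P x)
    (h_sum : ∑ x, P x = ∑ x, Q x) : 1 ≤ univ.sup' univ_nonempty (fun x => Q x / P x) := by
  obtain ⟨x, -, hx⟩ := exists_le_of_sum_le univ_nonempty h_sum.le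
  exact ((one_le_div (hP x)).2 hx).trans (le_sup' (fun x => Q x / P x) (mem_univ x))

variable {Pi P : X → ℝ}

theorem sum_mul_div_sub_one_sq (hPi : ∀ x, Pi x ≠ 0) (hPi_sum : ∑ x, Pi x = 1)
    (hP_sum : ∑ x, P x = 1) :
    ∑ x, Pi x * (P x / Pi x - 1) ^ 2 = ∑ x, P x * (P x / Pi x) - 1 := by
  have hterm : ∀ x, Pi x * (P x / Pi x - 1) ^ 2 = P x * (P x / Pi x) - 2 * P x + Pi x := by
    intro x
    field_simp [hPi x]
    ring
  simp only [hterm, sum_add_distrib, sum_sub_distrib, ← mul_sum, hPi_sum, hP_sum]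
  ring

theorem sum_mul_div_sub_one_mul_log (hPi : ∀ x, Pi x ≠ 0) :
    ∑ x, Pi x * ((P x / Pi x - 1) * Real.log (P x / Pi x)) = KLdiv P Pi + KLdiv Pi P := by
  have hterm : ∀ x, Pi x * ((P x / Pi x - 1) * Real.log (P x / Pi x))
      = P x * Real.log (P x / Pi x) + Pi x * Real.log (Pi x / P x) := by
    intro x
    rw [← inv_div, Real.log_inv]
    field_simp [hPi x]
    ring
  simp only [hterm, sum_add_distrib, KLdiv]

theorem sum_mul_log_div_sq_le (hPi : ∀ x, 0 < Pi x) (hP : ∀ x, 0 < P x)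
    (hPi_sum : ∑ x, Pi x = 1) (hP_sum : ∑ x, P x = 1) :
    ∑ x, Pi x * Real.log (P x / Pi x) ^ 2 ≤ ∑ x, Pi x * (Pi x / P x) - 1 := by
  have hterm : ∀ x, Pi x * Real.log (P x / Pi x) ^ 2 ≤ P x + Pi x * (Pi x / P x) - 2 * Pi x := by
    intro x
    calc Pi x * Real.log (P x / Pi x) ^ 2 ≤ Pi x * (P x / Pi x + (P x / Pi x)⁻¹ - 2) :=
          mul_le_mul_of_nonneg_left
            (Real.log_sq_le_add_inv_sub_two (div_pos (hP x) (hPi x))) (hPi x).le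
      _ = P x + Pi x * (Pi x / P x) - 2 * Pi x := by
          field_simp [(hPi x).ne', (hP x).ne']
  calc ∑ x, Pi x * Real.log (P x / Pi x) ^ 2
      ≤ ∑ x, (P x + Pi x * (Pi x / P x) - 2 * Pi x) := sum_le_sum fun x _ => hterm x
    _ = ∑ x, Pi x * (Pi x / P x) - 1 := by
        simp only [sum_add_distrib, sum_sub_distrib, ← mul_sum, hPi_sum, hP_sum]
        ring

theorem sum_mul_sq_lam_mul_sub_log_le [Nonempty X] (hPi : ∀ x, 0 < Pi x) (hP : ∀ x, 0 < P x)
    (hPi_sum : ∑ x, Pi x = 1) (hP_sum : ∑ x, P x = 1) (lam : ℝ) :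
    ∑ x, Pi x * (lam * (P x / Pi x - 1) - Real.log (P x / Pi x)) ^ 2
      ≤ lam ^ 2 * (univ.sup' univ_nonempty (fun x => P x / Pi x) - 1)
        + max (univ.sup' univ_nonempty (fun x => P x / Pi x) - 1)
            ((univ.sup' univ_nonempty (fun x => Pi x / P x)) ^ 2 - 1)
        - 2 * lam * (KLdiv P Pi + KLdiv Pi P) := by
  set α := univ.sup' univ_nonempty (fun x => P x / Pi x)
  set β := univ.sup' univ_nonempty (fun x => Pi x / P x)
  have hPi_ne : ∀ x, Pi x ≠ 0 := fun x => (hPi x).ne'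
  have hchi : ∑ x, Pi x * (P x / Pi x - 1) ^ 2 ≤ α - 1 := by
    rw [sum_mul_div_sub_one_sq hPi_ne hPi_sum hP_sum]
    linarith [sum_mul_le_sup'_of_sum_eq_one (fun x => (hP x).le) hP_sum (fun x => P x / Pi x)]
  have hlog : ∑ x, Pi x * Real.log (P x / Pi x) ^ 2 ≤ max (α - 1) (β ^ 2 - 1) := by
    have hβ : 1 ≤ β := one_le_sup'_div_of_sum_eq hP (hP_sum.trans hPi_sum.symm)
    have := sum_mul_le_sup'_of_sum_eq_one (fun x => (hPi x).le) hPi_sum (fun x => Pi x / P x)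
    refine (sum_mul_log_div_sq_le hPi hP hPi_sum hP_sum).trans (le_max_of_le_right ?_)
    nlinarith
  have hexpand : ∑ x, Pi x * (lam * (P x / Pi x - 1) - Real.log (P x / Pi x)) ^ 2
      = lam ^ 2 * ∑ x, Pi x * (P x / Pi x - 1) ^ 2
        - 2 * lam * ∑ x, Pi x * ((P x / Pi x - 1) * Real.log (P x / Pi x))
        + ∑ x, Pi x * Real.log (P x / Pi x) ^ 2 := by
    simp only [mul_sum, ← sum_sub_distrib, ← sum_add_distrib]
    exact sum_congr rfl fun x _ => by ring
  rw [hexpand, sum_mul_div_sub_one_mul_log hPi_ne]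
  nlinarith [mul_le_mul_of_nonneg_left hchi (sq_nonneg lam)]

end Divergences

section SampleMean

variable {X : Type*} [Fintype X] [MeasurableSpace X] [MeasurableSingletonClass X]
  {Ω : Type*} [MeasurableSpace Ω] {μ : Measure Ω}

theorem integral_comp_eq_sum [IsFiniteMeasure μ] {Pi : X → ℝ} (hPi : ∀ x, 0 ≤ Pi x)
    {f : Ω → X} (hf : Measurable f) (hlaw : ∀ x, μ (f ⁻¹' {x}) = ENNReal.ofReal (Pi x))
    (g : X → ℝ) : ∫ ω, g (f ω) ∂μ = ∑ x, Pi x * g x := by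
  rw [← integral_map hf.aemeasurable (.of_discrete), integral_fintype .of_finite]
  refine sum_congr rfl fun x _ => ?_
  rw [map_measureReal_apply hf (measurableSet_singleton x), measureReal_def, hlaw,
    ENNReal.toReal_ofReal (hPi x), smul_eq_mul]

theorem variance_mean_comp_le [IsProbabilityMeasure μ] {T : ℕ} {xs : Fin T → Ω → X}
    (hmeas : ∀ t, Measurable (xs t)) (hindep : iIndepFun xs μ) {Pi : X → ℝ}
    (hPi : ∀ x, 0 ≤ Pi x) (hlaw : ∀ t x, μ (xs t ⁻¹' {x}) = ENNReal.ofReal (Pi x))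
    (g : X → ℝ) :
    variance (fun ω => (1 / (T : ℝ)) * ∑ t, g (xs t ω)) μ ≤ (∑ x, Pi x * g x ^ 2) / T := by
  have hg : Measurable g := .of_discrete
  have hmemLp : ∀ t, MemLp (fun ω => g (xs t ω)) 2 μ := fun t =>
    MemLp.of_discrete.comp_of_map (hmeas t).aemeasurable
  have hvar_t : ∀ t, variance (fun ω => g (xs t ω)) μ ≤ ∑ x, Pi x * g x ^ 2 := fun t =>
    calc variance (fun ω => g (xs t ω)) μ ≤ μ[(fun ω => g (xs t ω)) ^ 2] :=
          variance_le_expectation_sq (X := fun ω => g (xs t ω))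
            (hg.comp (hmeas t)).aestronglyMeasurable
      _ = ∑ x, Pi x * g x ^ 2 := integral_comp_eq_sum hPi (hmeas t) (hlaw t) (g · ^ 2)
  have hsum := IndepFun.variance_sum (s := univ) (fun t _ => hmemLp t)
    fun i _ j _ hij => (hindep.indepFun hij).comp hg hg
  rw [sum_fn] at hsum
  calc variance (fun ω => (1 / (T : ℝ)) * ∑ t, g (xs t ω)) μ
      = (1 / (T : ℝ)) ^ 2 * ∑ t, variance (fun ω => g (xs t ω)) μ := by
        rw [variance_const_mul, hsum]
    _ ≤ (1 / (T : ℝ)) ^ 2 * ∑ _t : Fin T, ∑ x, Pi x * g x ^ 2 := by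
        gcongr with t; exact hvar_t t
    _ = (∑ x, Pi x * g x ^ 2) / T := by
        rw [sum_const, card_univ, Fintype.card_fin, nsmul_eq_mul]
        rcases eq_or_ne (T : ℝ) 0 with hT | hT
        · simp [hT]
        · field_simp

end SampleMean

theorem tagg_estimator_variance_bound_general {X : Type*} [Fintype X] [Nonempty X]
    [MeasurableSpace X] [MeasurableSingletonClass X]
    (Pi P : X → ℝ)
    (hPipos : ∀ x, 0 < Pi x) (hPisum : ∑ x, Pi x = 1)
    (hPpos : ∀ x, 0 < P x) (hPsum : ∑ x, P x = 1)
    (T : ℕ)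
    {Ω : Type*} [MeasureSpace Ω] [IsProbabilityMeasure (ℙ : Measure Ω)]
    (xs : Fin T → Ω → X) (hmeas : ∀ t, Measurable (xs t))
    (hindep : iIndepFun xs ℙ)
    (hlaw : ∀ t x, (ℙ : Measure Ω) (xs t ⁻¹' {x}) = ENNReal.ofReal (Pi x))
    (lam : ℝ)
    (η' : Ω → ℝ) (hη' : MemLp η' 2 ℙ)
    (hη'indep : IndepFun (fun ω => (fun t => xs t ω)) η' ℙ)
    (σ'2 : ℝ) (hσ'2 : variance η' ℙ = σ'2) :
    variance (fun ω => (1 / (T : ℝ)) * ∑ t : Fin T,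
        (lam * (P (xs t ω) / Pi (xs t ω) - 1) - Real.log (P (xs t ω) / Pi (xs t ω)))
      + 2 * η' ω / T) ℙ
    ≤ (lam ^ 2 / T) * (univ.sup' univ_nonempty (fun x => P x / Pi x) - 1)
      + (1 / (T : ℝ)) * (max (univ.sup' univ_nonempty (fun x => P x / Pi x) - 1)
            ((univ.sup' univ_nonempty (fun x => Pi x / P x)) ^ 2 - 1)
          + KLdiv Pi P ^ 2)
      - (2 * lam / T) * (KLdiv P Pi + KLdiv Pi P)
      + 4 * σ'2 / T ^ 2 := by
  set f : X → ℝ := fun x => lam * (P x / Pi x - 1) - Real.log (P x / Pi x)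
  set mean : (Fin T → X) → ℝ := fun v => 1 / (T : ℝ) * ∑ t, f (v t)
  have hmean_memLp : MemLp (fun ω => mean fun t => xs t ω) 2 ℙ :=
    (MemLp.of_discrete (f := mean)).comp_of_map (measurable_pi_lambda _ hmeas).aemeasurable
  have hindep_noise :
      IndepFun (fun ω => mean fun t => xs t ω) (fun ω => 2 / (T : ℝ) * η' ω) ℙ :=
    hη'indep.comp (φ := mean) .of_discrete (measurable_const_mul _)
  have hnoise : (fun ω => 2 * η' ω / (T : ℝ)) = fun ω => 2 / (T : ℝ) * η' ω := by
    simp only [mul_div_right_comm]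
  change variance ((fun ω => mean fun t => xs t ω) + fun ω => 2 * η' ω / T) ℙ ≤ _
  rw [hnoise, hindep_noise.variance_add hmean_memLp (hη'.const_mul _),
    variance_const_mul _ η', hσ'2]
  have hmean := variance_mean_comp_le hmeas hindep (fun x => (hPipos x).le) hlaw f
  have hsecond := div_le_div_of_nonneg_right
    (sum_mul_sq_lam_mul_sub_log_le hPipos hPpos hPisum hPsum lam) T.cast_nonneg
  have hKL : 0 ≤ KLdiv Pi P ^ 2 / T := by positivity
  linear_combination hmean + hsecond + hKL

/-- Variance bound for PRIEST-KLD under the trusted aggregator model: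
with `x₁, …, x_T` i.i.d. with law `Pi`, `λ ≥ 0`, and square-integrable noise `η'`
independent of `(x₁, …, x_T)` with variance `σ'²`, the variance of
`(1/T) ∑ₜ (λ (r(xₜ) - 1) - log r(xₜ)) + 2η'/T` is at most
`(λ²/T)(α - 1) + (1/T)(max {α - 1, β² - 1} + D_KL(Pi‖P)²)
  - (2λ/T)(D_KL(P‖Pi) + D_KL(Pi‖P)) + 4σ'²/T²`. -/
theorem tagg_estimator_variance_bound {X : Type*} [Fintype X] [Nonempty X]
    [MeasurableSpace X] [MeasurableSingletonClass X]
    (Pi P : X → ℝ)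
    (hPipos : ∀ x, 0 < Pi x) (hPisum : ∑ x, Pi x = 1)
    (hPpos : ∀ x, 0 < P x) (hPsum : ∑ x, P x = 1)
    (T : ℕ) (hT : 1 ≤ T)
    {Ω : Type*} [MeasureSpace Ω] [IsProbabilityMeasure (ℙ : Measure Ω)]
    (xs : Fin T → Ω → X) (hmeas : ∀ t, Measurable (xs t))
    (hindep : iIndepFun xs ℙ)
    (hlaw : ∀ t x, (ℙ : Measure Ω) (xs t ⁻¹' {x}) = ENNReal.ofReal (Pi x))
    (lam : ℝ) (hlam : 0 ≤ lam)
    (η' : Ω → ℝ) (hη' : MemLp η' 2 ℙ)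
    (hη'indep : IndepFun (fun ω => (fun t => xs t ω)) η' ℙ)
    (σ'2 : ℝ) (hσ'2 : variance η' ℙ = σ'2) :
    variance (fun ω => (1 / (T : ℝ)) * ∑ t : Fin T,
        (lam * (P (xs t ω) / Pi (xs t ω) - 1) - Real.log (P (xs t ω) / Pi (xs t ω)))
      + 2 * η' ω / T) ℙ
    ≤ (lam ^ 2 / T) * (univ.sup' univ_nonempty (fun x => P x / Pi x) - 1)
      + (1 / (T : ℝ)) * (max (univ.sup' univ_nonempty (fun x => P x / Pi x) - 1)
            ((univ.sup' univ_nonempty (fun x => Pi x / P x)) ^ 2 - 1)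
          + KLdiv Pi P ^ 2)
      - (2 * lam / T) * (KLdiv P Pi + KLdiv Pi P)
      + 4 * σ'2 / T ^ 2 :=
  tagg_estimator_variance_bound_general Pi P hPipos hPisum hPpos hPsum T xs hmeas hindep hlaw lam η'
    hη' hη'indep σ'2 hσ'2
end

section
/- Let X be a finite set with at least two elements, and let h₁, h₂ : X → ℕ be histograms with h₁(x) ≥ 2 and h₂(x) ≥ 2 for all x ∈ X, equal finite cardinality N = ∑_x h₁(x) = ∑_x h₂(x), and adjacent: there exist distinct x₁, x₂ ∈ X with h₁(x₁) − h₂(x₁) = 1, h₁(x₂) − h₂(x₂) = −1, and h₁(x) = h₂(x) for all other x. Let P₁(x) = h₁(x)/N and P₂(x) = h₂(x)/N, and let Π be any full-support probability distribution on X. Then |D_KL(Π‖P₁) − D_KL(Π‖P₂)| ≤ log 2 < 0.7. (Hence the sensitivity of the KL divergence query η(P) = D_KL(Π‖P) restricted to empirical distributions of histograms with all counts at least 2 is less than 0.7.) -/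
open Finset

lemma abs_log_nat_succ_le {k : ℕ} (hk : 1 ≤ k) :
    |Real.log k - Real.log ((k : ℝ) + 1)| ≤ Real.log 2 := by
  have hk0 : (0:ℝ) < k := by exact_mod_cast hk
  have hle : Real.log (k : ℝ) ≤ Real.log ((k:ℝ) + 1) :=
    Real.log_le_log hk0 (by linarith)
  rw [abs_sub_comm, abs_of_nonneg (by linarith),
    ← Real.log_div (by positivity) (ne_of_gt hk0)]
  apply Real.log_le_log (by positivity)
  rw [div_le_iff₀ hk0]
  have : (1:ℝ) ≤ k := by exact_mod_cast hk
  linarith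

/-- Sensitivity of the KL divergence query on adjacent histograms with all
counts at least 2: if `h₁ ∼ h₂` are adjacent histograms of common cardinality `N` with all
counts `≥ 2`, `P₁, P₂` their empirical distributions, and `Pi` any full-support distribution,
then `|D_KL(Pi‖P₁) - D_KL(Pi‖P₂)| ≤ log 2 < 0.7`. -/
theorem sensitivity_KL_adjacent_histograms {X : Type*} [Fintype X]
    (hcard : 1 < Fintype.card X)
    (h₁ h₂ : X → ℕ) (hh₁ : ∀ x, 2 ≤ h₁ x) (hh₂ : ∀ x, 2 ≤ h₂ x)
    (N : ℕ) (hN₁ : ∑ x, h₁ x = N) (hN₂ : ∑ x, h₂ x = N)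
    (x₁ x₂ : X) (hx : x₁ ≠ x₂)
    (hadj₁ : h₁ x₁ = h₂ x₁ + 1) (hadj₂ : h₂ x₂ = h₁ x₂ + 1)
    (hadj : ∀ x, x ≠ x₁ → x ≠ x₂ → h₁ x = h₂ x)
    (Pi : X → ℝ) (hPipos : ∀ x, 0 < Pi x) (hPisum : ∑ x, Pi x = 1) :
    |KLdiv Pi (fun x => (h₁ x : ℝ) / N) - KLdiv Pi (fun x => (h₂ x : ℝ) / N)|
      ≤ Real.log 2 ∧ Real.log 2 < 0.7 := by
  classical
  have hlog2 : (0:ℝ) ≤ Real.log 2 := Real.log_nonneg (by norm_num)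
  refine ⟨?_, by linarith [Real.log_two_lt_d9]⟩
  have hNpos : 0 < N := by
    rw [← hN₁]
    have hx1 : x₁ ∈ (univ : Finset X) := mem_univ _
    calc 0 < h₁ x₁ := by have := hh₁ x₁; omega
    _ ≤ ∑ x, h₁ x := Finset.single_le_sum (fun i _ => Nat.zero_le _) hx1
  have hNR : (0:ℝ) < N := by exact_mod_cast hNpos
  set f : X → ℝ := fun x => Pi x * (Real.log (h₂ x) - Real.log (h₁ x)) with hf
  have key : KLdiv Pi (fun x => (h₁ x : ℝ) / N) - KLdiv Pi (fun x => (h₂ x : ℝ) / N)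
      = ∑ x, f x := by
    unfold KLdiv
    rw [← Finset.sum_sub_distrib]
    apply Finset.sum_congr rfl
    intro x _
    have h1p : (0:ℝ) < h₁ x := by have := hh₁ x; positivity
    have h2p : (0:ℝ) < h₂ x := by have := hh₂ x; positivity
    have hp := hPipos x
    rw [Real.log_div (ne_of_gt hp) (by positivity),
        Real.log_div (ne_of_gt hp) (by positivity),
        Real.log_div (ne_of_gt h1p) (ne_of_gt hNR),
        Real.log_div (ne_of_gt h2p) (ne_of_gt hNR)]
    simp only [hf]
    ring
  rw [key]
  have hzero : ∀ x ∈ (univ : Finset X), x ∉ ({x₁, x₂} : Finset X) → f x = 0 := by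
    intro x _ hxm
    simp only [mem_insert, mem_singleton, not_or] at hxm
    rw [hf]
    simp [hadj x hxm.1 hxm.2]
  rw [← Finset.sum_subset (Finset.subset_univ _) hzero,
      Finset.sum_pair hx]
  have hb1 : |f x₁| ≤ Pi x₁ * Real.log 2 := by
    rw [hf, abs_mul, abs_of_pos (hPipos x₁)]
    apply mul_le_mul_of_nonneg_left _ (le_of_lt (hPipos x₁))
    rw [hadj₁]
    push_cast
    exact abs_log_nat_succ_le (by have := hh₂ x₁; omega)
  have hb2 : |f x₂| ≤ Pi x₂ * Real.log 2 := by
    rw [hf, abs_mul, abs_of_pos (hPipos x₂)]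
    apply mul_le_mul_of_nonneg_left _ (le_of_lt (hPipos x₂))
    rw [hadj₂]
    push_cast
    rw [abs_sub_comm]
    exact abs_log_nat_succ_le (by have := hh₁ x₂; omega)
  have hsum : Pi x₁ + Pi x₂ ≤ 1 := by
    rw [← hPisum, ← Finset.sum_pair hx]
    exact Finset.sum_le_sum_of_subset_of_nonneg (Finset.subset_univ _)
      (fun i _ _ => le_of_lt (hPipos i))
  calc |f x₁ + f x₂| ≤ |f x₁| + |f x₂| := abs_add_le _ _
    _ ≤ Pi x₁ * Real.log 2 + Pi x₂ * Real.log 2 := add_le_add hb1 hb2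
    _ = (Pi x₁ + Pi x₂) * Real.log 2 := by ring
    _ ≤ 1 * Real.log 2 := mul_le_mul_of_nonneg_right hsum hlog2
    _ = Real.log 2 := one_mul _
end

section
/- Let X be a finite set with at least two elements, let Π be a full-support probability distribution on X, and let m = min_{x∈X} Π(x). Let h₁, h₂ : X → ℕ be adjacent histograms of common cardinality N with h₁(x) ≥ 2 and h₂(x) ≥ 2 for all x ∈ X, and set P₁(x) = h₁(x)/N, P₂(x) = h₂(x)/N, r₁(x) = P₁(x)/Π(x), r₂(x) = P₂(x)/Π(x), and α̂ = max{max_{x∈X} P₁(x)/Π(x), max_{x∈X} P₂(x)/Π(x)}. Then for all reals λ₁, λ₂ ≥ 0 and every x ∈ X: |(λ₁(r₁(x) − 1) − log r₁(x)) − (λ₂(r₂(x) − 1) − log r₂(x))| ≤ (α̂ + 1)·|λ₁ − λ₂| + λ₂/(N·m) + log 2. (Sensitivity bound on the PRIEST-KLD per-sample estimator across adjacent datasets.) -/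
open Finset

/-- Sensitivity bound on the PRIEST-KLD per-sample estimator across
adjacent datasets: for adjacent histograms `h₁ ∼ h₂` of common cardinality `N` with all
counts at least 2, empirical distributions `P₁, P₂`, a full-support reference `Pi` with
minimum mass `m`, ratios `rᵢ x = Pᵢ x / Pi x`, and
`α̂ = max {max_x P₁ x / Pi x, max_x P₂ x / Pi x}`, for all `λ₁, λ₂ ≥ 0` and every `x`,
`|(λ₁ (r₁ x - 1) - log r₁ x) - (λ₂ (r₂ x - 1) - log r₂ x)|
  ≤ (α̂ + 1) |λ₁ - λ₂| + λ₂ / (N m) + log 2`. -/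
theorem sensitivity_per_sample_estimator {X : Type*} [Fintype X]
    (hcard : 1 < Fintype.card X)
    (Pi : X → ℝ) (hPipos : ∀ x, 0 < Pi x) (hPisum : ∑ x, Pi x = 1)
    (h₁ h₂ : X → ℕ) (hh₁ : ∀ x, 2 ≤ h₁ x) (hh₂ : ∀ x, 2 ≤ h₂ x)
    (N : ℕ) (hN₁ : ∑ x, h₁ x = N) (hN₂ : ∑ x, h₂ x = N)
    (x₁ x₂ : X) (hx : x₁ ≠ x₂)
    (hadj₁ : h₁ x₁ = h₂ x₁ + 1) (hadj₂ : h₂ x₂ = h₁ x₂ + 1)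
    (hadj : ∀ x, x ≠ x₁ → x ≠ x₂ → h₁ x = h₂ x) :
    haveI : Nonempty X := Fintype.card_pos_iff.mp (Nat.lt_of_lt_of_le Nat.zero_lt_one hcard.le)
    ∀ (lam₁ lam₂ : ℝ), 0 ≤ lam₁ → 0 ≤ lam₂ → ∀ x : X,
      |(lam₁ * ((h₁ x : ℝ) / N / Pi x - 1) - Real.log ((h₁ x : ℝ) / N / Pi x))
        - (lam₂ * ((h₂ x : ℝ) / N / Pi x - 1) - Real.log ((h₂ x : ℝ) / N / Pi x))|
      ≤ (max (univ.sup' univ_nonempty (fun y => (h₁ y : ℝ) / N / Pi y))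
             (univ.sup' univ_nonempty (fun y => (h₂ y : ℝ) / N / Pi y)) + 1)
            * |lam₁ - lam₂|
        + lam₂ / (N * univ.inf' univ_nonempty Pi)
        + Real.log 2 := by
  haveI : Nonempty X := Fintype.card_pos_iff.mp (Nat.lt_of_lt_of_le Nat.zero_lt_one hcard.le)
  intro lam₁ lam₂ hl₁ hl₂ x
  have hNnat : 0 < N := by
    rw [← hN₁]
    exact Finset.sum_pos (fun y _ => lt_of_lt_of_le two_pos (hh₁ y)) univ_nonempty
  have hNpos : (0:ℝ) < N := by exact_mod_cast hNnat
  have hPx : 0 < Pi x := hPipos x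
  set m := univ.inf' univ_nonempty Pi with hm
  have hmpos : 0 < m := by
    rw [hm, Finset.lt_inf'_iff]
    exact fun y _ => hPipos y
  have hmle : m ≤ Pi x := Finset.inf'_le _ (mem_univ x)
  set A := (h₁ x : ℝ) / N / Pi x with hA
  set B := (h₂ x : ℝ) / N / Pi x with hB
  have h1pos : (0:ℝ) < h₁ x := by exact_mod_cast lt_of_lt_of_le two_pos (hh₁ x)
  have h2pos : (0:ℝ) < h₂ x := by exact_mod_cast lt_of_lt_of_le two_pos (hh₂ x)
  have hApos : 0 < A := div_pos (div_pos h1pos hNpos) hPx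
  have hBpos : 0 < B := div_pos (div_pos h2pos hNpos) hPx
  set al := max (univ.sup' univ_nonempty (fun y => (h₁ y : ℝ) / N / Pi y))
             (univ.sup' univ_nonempty (fun y => (h₂ y : ℝ) / N / Pi y)) with hal
  have hAle : A ≤ al :=
    le_max_of_le_left (Finset.le_sup' (fun y => (h₁ y : ℝ) / N / Pi y) (mem_univ x))
  have hdiff : |(h₁ x:ℝ) - h₂ x| ≤ 1 := by
    rcases eq_or_ne x x₁ with rfl | hx1
    · rw [hadj₁]; push_cast; simp
    · rcases eq_or_ne x x₂ with rfl | hx2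
      · rw [hadj₂]; push_cast; rw [abs_sub_comm]; simp
      · rw [hadj x hx1 hx2]; simp
  have hdiff' := abs_le.mp hdiff
  -- bound 1
  have hb1 : |A - 1| ≤ al + 1 := abs_le.mpr ⟨by linarith, by linarith⟩
  -- bound 2
  have hAB : A - B = ((h₁ x:ℝ) - h₂ x) / (N * Pi x) := by
    rw [hA, hB]; field_simp
  have hb2 : |A - B| ≤ 1 / (N * m) := by
    rw [hAB, abs_div, abs_of_pos (mul_pos hNpos hPx)]
    exact div_le_div₀ one_pos.le hdiff (mul_pos hNpos hmpos)
      (mul_le_mul_of_nonneg_left hmle hNpos.le)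
  -- bound 3
  have hratio : A / B = (h₁ x:ℝ) / h₂ x := by
    rw [hA, hB]; field_simp
  have hb3 : |Real.log B - Real.log A| ≤ Real.log 2 := by
    rw [abs_sub_comm, ← Real.log_div hApos.ne' hBpos.ne', hratio]
    have h1ge : (2:ℝ) ≤ h₁ x := by exact_mod_cast hh₁ x
    have h2ge : (2:ℝ) ≤ h₂ x := by exact_mod_cast hh₂ x
    have ht1 : (h₁ x:ℝ) / h₂ x ≤ 2 := by
      rw [div_le_iff₀ h2pos]; linarith [hdiff'.2]
    have ht2 : (2:ℝ)⁻¹ ≤ (h₁ x:ℝ) / h₂ x := by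
      rw [le_div_iff₀ h2pos]; linarith [hdiff'.1]
    have htpos : 0 < (h₁ x:ℝ) / h₂ x := div_pos h1pos h2pos
    rw [abs_le]
    constructor
    · rw [← Real.log_inv]
      exact Real.log_le_log (by norm_num) ht2
    · exact Real.log_le_log htpos ht1
  have key : (lam₁ * (A - 1) - Real.log A) - (lam₂ * (B - 1) - Real.log B)
      = (lam₁ - lam₂) * (A - 1) + lam₂ * (A - B) + (Real.log B - Real.log A) := by ring
  calc |(lam₁ * (A - 1) - Real.log A) - (lam₂ * (B - 1) - Real.log B)|
      = |(lam₁ - lam₂) * (A - 1) + lam₂ * (A - B) + (Real.log B - Real.log A)| := by rw [key]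
    _ ≤ |(lam₁ - lam₂) * (A - 1) + lam₂ * (A - B)| + |Real.log B - Real.log A| := abs_add_le _ _
    _ ≤ (|(lam₁ - lam₂) * (A - 1)| + |lam₂ * (A - B)|) + |Real.log B - Real.log A| := by
        gcongr; exact abs_add_le _ _
    _ ≤ ((al + 1) * |lam₁ - lam₂| + lam₂ / (N * m)) + Real.log 2 := by
        refine add_le_add (add_le_add ?_ ?_) hb3
        · rw [abs_mul, mul_comm]
          exact mul_le_mul_of_nonneg_right hb1 (abs_nonneg _)
        · rw [abs_mul, abs_of_nonneg hl₂]
          calc lam₂ * |A - B| ≤ lam₂ * (1 / (N * m)) :=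
                mul_le_mul_of_nonneg_left hb2 hl₂
            _ = lam₂ / (N * m) := by ring
    _ = (al + 1) * |lam₁ - lam₂| + lam₂ / (N * m) + Real.log 2 := by ring
end
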